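/- arXiv:1802.07811 — 5 statements merged into one kernel-verified Lean document; each statement's English description precedes it below -/
import Mathlib

section
/- Let x + y√p be an indecomposable element of the ring of integers of Q(√p) (p squarefree, x, y ∈ (1/2)Z). If x + y√p is decomposable (a sum of two totally positive integers) in the biquadratic field K = Q(√p,√q), then min{q, r} < 16x², where r = pq/gcd(p,q)². -/
/-- The four real embeddings of the biquadratic field `Q(√p,√q)` applied to the element
`a + b√p + c√q + d√r` (given by the quadruple `v = (a,b,c,d)` of rationals); the signs
`s, t ∈ {1,-1}` determine the embedding: `√p ↦ s√p`, `√q ↦ t√q`, `√r ↦ st√r`. -/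
noncomputable def emb (p q r : ℕ) (s t : ℤ) (v : ℚ × ℚ × ℚ × ℚ) : ℝ :=
  (v.1 : ℝ) + (s : ℝ) * (v.2.1 : ℝ) * Real.sqrt p + (t : ℝ) * (v.2.2.1 : ℝ) * Real.sqrt q
    + (s : ℝ) * (t : ℝ) * (v.2.2.2 : ℝ) * Real.sqrt r

/-- The possible signs. -/
def Sgn : Set ℤ := {1, -1}

/-- Total positivity: all four embeddings are positive. -/
def TotPos (p q r : ℕ) (v : ℚ × ℚ × ℚ × ℚ) : Prop :=
  ∀ s ∈ Sgn, ∀ t ∈ Sgn, 0 < emb p q r s t v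

/-- Membership in the ring of integers of `Q(√p,√q)`. -/
def IsIntK (p q r : ℕ) (v : ℚ × ℚ × ℚ × ℚ) : Prop :=
  IsIntegral ℤ (emb p q r 1 1 v)

/-- Indecomposability: totally positive and not a sum of two totally positive integers. -/
def Indec (p q r : ℕ) (v : ℚ × ℚ × ℚ × ℚ) : Prop :=
  TotPos p q r v ∧ IsIntK p q r v ∧
    ¬ ∃ β γ : ℚ × ℚ × ℚ × ℚ, IsIntK p q r β ∧ IsIntK p q r γ ∧
      TotPos p q r β ∧ TotPos p q r γ ∧ β + γ = v

/-!
Write the two summands as `β = a + b√p + c√q + d√r` and `x + y√p - β`. Total positivity of both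
bounds `|c√q ± d√r|` by the corresponding conjugates of `x + y√p`, so
`|c√q + d√r| + |c√q - d√r| < x`. If `c√q + d√r = 0` (or `q = 1`), then `β` already lies in
`ℚ(√p)`, against the indecomposability of `x + y√p` there. Otherwise `c ≠ 0` or `d ≠ 0`, and the
relative traces `2a ± 2c√q`, resp. `2a ± 2d√r`, are algebraic integers of a quadratic field with
squarefree radicand; hence `|2c| ≥ 1/2`, resp. `|2d| ≥ 1/2`, which gives `√(min q r) < 2x`.
(For `p = 1` the field is `ℚ(√q)` and `β = (a + b) + (c + d)√q`, so the same bound comes from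
`|c + d| ≥ 1/2`.) The conjugates of `β` are integral because the pairs (element, conjugate) form a
ring on which the first projection is injective, by linear independence of `1, √p, √q, √pq`.
-/

theorem isIntegral_snd_of_isIntegral_fst {A B : Type*} [CommRing A] [CommRing B]
    {W : Subring (A × B)} (hW : ∀ z ∈ W, z.1 = 0 → z.2 = 0) {z : A × B} (hz : z ∈ W)
    (h : IsIntegral ℤ z.1) : IsIntegral ℤ z.2 := by
  let fstW : W →+* A := (RingHom.fst A B).comp W.subtype
  have hinj : Function.Injective fstW :=
    (injective_iff_map_eq_zero fstW).mpr fun w hw => Subtype.ext (Prod.ext hw (hW w w.2 hw))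
  have hzW : IsIntegral ℤ (⟨z, hz⟩ : W) := (isIntegral_algHom_iff fstW.toIntAlgHom hinj).mp h
  exact hzW.map ((RingHom.snd A B).comp W.subtype).toIntAlgHom

theorem Irrational.eq_zero_of_ratCast_mul_eq {ξ : ℝ} (hξ : Irrational ξ) {k m : ℚ}
    (h : (k : ℝ) * ξ = m) : k = 0 ∧ m = 0 := by
  by_cases hk : k = 0
  · subst hk
    exact ⟨rfl, by exact_mod_cast (by simpa using h.symm : (m : ℝ) = 0)⟩
  · exact absurd ⟨m, h.symm⟩ (hξ.ratCast_mul hk)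

theorem Irrational.sq_ne_ratCast_sq {ξ : ℝ} (hξ : Irrational ξ) (t : ℚ) : ξ ^ 2 ≠ (t : ℝ) ^ 2 := by
  intro h
  rcases sq_eq_sq_iff_eq_or_eq_neg.mp h with h | h
  · exact hξ ⟨t, h.symm⟩
  · exact hξ ⟨-t, by push_cast; exact h.symm⟩

theorem eq_zero_of_add_mul_add_mul_add_mul_eq_zero {P Q : ℝ} {p q : ℚ}
    (hP : P ^ 2 = p) (hQ : Q ^ 2 = q)
    (hPi : Irrational P) (hQi : Irrational Q) (hPQi : Irrational (P * Q)) {a b c d : ℚ}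
    (h : (a : ℝ) + b * P + c * Q + d * (P * Q) = 0) : a = 0 ∧ b = 0 ∧ c = 0 ∧ d = 0 := by
  -- square `a + bP = -Q (c + dP)` and `a + cQ = -P (b + dQ)`, then compare rational parts
  have hQpart : ((2 * a * b - 2 * q * c * d : ℚ) : ℝ) * P
      = ((q * c ^ 2 + p * q * d ^ 2 - a ^ 2 - p * b ^ 2 : ℚ) : ℝ) := by
    have e : ((a : ℝ) + b * P) ^ 2 = (Q * (c + d * P)) ^ 2 := by
      rw [show (a : ℝ) + b * P = -(Q * (c + d * P)) by linear_combination h]; ring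
    push_cast
    linear_combination e + (-(b : ℝ) ^ 2 + (q : ℝ) * d ^ 2) * hP + ((c : ℝ) + d * P) ^ 2 * hQ
  have hPpart : ((2 * a * c - 2 * p * b * d : ℚ) : ℝ) * Q
      = ((p * b ^ 2 + p * q * d ^ 2 - a ^ 2 - q * c ^ 2 : ℚ) : ℝ) := by
    have e : ((a : ℝ) + c * Q) ^ 2 = (P * (b + d * Q)) ^ 2 := by
      rw [show (a : ℝ) + c * Q = -(P * (b + d * Q)) by linear_combination h]; ring
    push_cast
    linear_combination e + (-(c : ℝ) ^ 2 + (p : ℝ) * d ^ 2) * hQ + ((b : ℝ) + d * Q) ^ 2 * hP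
  obtain ⟨-, h₁⟩ := hPi.eq_zero_of_ratCast_mul_eq hQpart
  obtain ⟨-, h₂⟩ := hQi.eq_zero_of_ratCast_mul_eq hPpart
  have hPQ : (P * Q) ^ 2 = ((p * q : ℚ) : ℝ) := by rw [mul_pow, hP, hQ]; push_cast; ring
  have hd : d = 0 := by
    by_contra hd
    refine hPQi.sq_ne_ratCast_sq (a / d) ?_
    rw [hPQ]
    push_cast
    field_simp
    exact_mod_cast (by linear_combination (h₁ + h₂) / 2 : p * q * d ^ 2 = a ^ 2)
  have ha : a = 0 := by
    subst hd
    exact pow_eq_zero_iff two_ne_zero |>.mp (by linear_combination -(h₁ + h₂) / 2)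
  have hq0 : q ≠ 0 := by
    rintro rfl
    have hQ0 : Q = 0 := pow_eq_zero_iff two_ne_zero |>.mp (by simpa using hQ)
    exact hQi ⟨0, by simp [hQ0]⟩
  have hb : b = 0 := by
    by_contra hb
    refine hPQi.sq_ne_ratCast_sq (q * c / b) ?_
    rw [hPQ]
    push_cast
    field_simp
    exact_mod_cast (by subst hd; linear_combination (h₂ - h₁) / 2 : p * b ^ 2 = q * c ^ 2)
  have hc : c = 0 := by
    subst ha hb hd
    have : q * c ^ 2 = 0 := by linear_combination h₁
    exact pow_eq_zero_iff two_ne_zero |>.mp ((mul_eq_zero.mp this).resolve_left hq0)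
  exact ⟨ha, hb, hc, hd⟩

def conjPairs {p q : ℚ} {P Q P' Q' : ℝ} (hP : P ^ 2 = p) (hP' : P' ^ 2 = p)
    (hQ : Q ^ 2 = q) (hQ' : Q' ^ 2 = q) : Subring (ℝ × ℝ) where
  carrier := {z | ∃ a b c d : ℚ, z = ((a : ℝ) + b * P + c * Q + d * (P * Q),
    (a : ℝ) + b * P' + c * Q' + d * (P' * Q'))}
  mul_mem' := by
    rintro _ _ ⟨a, b, c, d, rfl⟩ ⟨a', b', c', d', rfl⟩
    refine ⟨a * a' + p * b * b' + q * c * c' + p * q * d * d',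
      a * b' + b * a' + q * (c * d' + d * c'), a * c' + c * a' + p * (b * d' + d * b'),
      a * d' + d * a' + b * c' + c * b', ?_⟩
    simp only [Prod.mk_mul_mk, Prod.mk.injEq]
    push_cast
    constructor
    · linear_combination (b * b' + d * d' * Q ^ 2 + (b * d' + d * b') * Q) * hP
        + (c * c' + p * d * d' + (c * d' + d * c') * P) * hQ
    · linear_combination (b * b' + d * d' * Q' ^ 2 + (b * d' + d * b') * Q') * hP'
        + (c * c' + p * d * d' + (c * d' + d * c') * P') * hQ'
  one_mem' := ⟨1, 0, 0, 0, by ext <;> simp⟩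
  add_mem' := by
    rintro _ _ ⟨a, b, c, d, rfl⟩ ⟨a', b', c', d', rfl⟩
    exact ⟨a + a', b + b', c + c', d + d', by
      simp only [Prod.mk_add_mk, Prod.mk.injEq]; push_cast; constructor <;> ring⟩
  zero_mem' := ⟨0, 0, 0, 0, by ext <;> simp⟩
  neg_mem' := by
    rintro _ ⟨a, b, c, d, rfl⟩
    exact ⟨-a, -b, -c, -d, by
      simp only [Prod.neg_mk, Prod.mk.injEq]; push_cast; constructor <;> ring⟩

theorem isIntegral_conj {p q : ℚ} {P Q P' Q' : ℝ} (hP : P ^ 2 = p) (hP' : P' ^ 2 = p)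
    (hQ : Q ^ 2 = q) (hQ' : Q' ^ 2 = q)
    (hinj : ∀ a b c d : ℚ, (a : ℝ) + b * P + c * Q + d * (P * Q) = 0 →
      (a : ℝ) + b * P' + c * Q' + d * (P' * Q') = 0)
    {a b c d : ℚ} (h : IsIntegral ℤ ((a : ℝ) + b * P + c * Q + d * (P * Q))) :
    IsIntegral ℤ ((a : ℝ) + b * P' + c * Q' + d * (P' * Q')) := by
  refine isIntegral_snd_of_isIntegral_fst (W := conjPairs hP hP' hQ hQ') ?_ ⟨a, b, c, d, rfl⟩ h
  rintro _ ⟨a, b, c, d, rfl⟩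
  exact hinj a b c d

theorem Rat.exists_intCast_eq_of_isIntegral {t : ℚ} (h : IsIntegral ℤ (t : ℝ)) :
    ∃ n : ℤ, (n : ℚ) = t :=
  IsIntegrallyClosed.isIntegral_iff.mp <|
    (isIntegral_algHom_iff (algebraMap ℚ ℝ).toIntAlgHom (algebraMap ℚ ℝ).injective).mp h

theorem exists_intCast_eq_of_squarefree_mul_sq {m : ℕ} (hm : Squarefree m) {t : ℚ}
    (h : ∃ N : ℤ, (N : ℚ) = m * t ^ 2) : ∃ k : ℤ, (k : ℚ) = t := by
  obtain ⟨N, hN⟩ := h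
  refine ⟨t.num, Rat.coe_int_num_of_den_eq_one ?_⟩
  have hmul : N * (t.den : ℤ) ^ 2 = m * t.num ^ 2 := by
    have hden : (t.den : ℚ) ≠ 0 := by exact_mod_cast t.den_nz
    rw [← Rat.num_div_den t] at hN
    field_simp at hN
    exact_mod_cast hN
  have hdvd : t.den ^ 2 ∣ m * t.num.natAbs ^ 2 := by
    simpa [Int.natAbs_mul, Int.natAbs_pow] using Int.natAbs_dvd_natAbs.mpr (Dvd.intro_left _ hmul)
  have hden_dvd : t.den * t.den ∣ m := by
    rw [← sq]
    exact (Nat.Coprime.pow 2 2 t.reduced.symm).dvd_of_dvd_mul_right hdvd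
  exact Nat.isUnit_iff.mp (hm _ hden_dvd)

/-- `2f ∈ ℤ`, read off the discriminant `(2e)² - 4(e² - f²m) = m(2f)²` of `e + f√m`. -/
theorem half_le_abs_of_isIntegral {m : ℕ} (hm : Squarefree m) {e f : ℚ} (hf : f ≠ 0)
    (h₁ : IsIntegral ℤ ((e : ℝ) + f * √m)) (h₂ : IsIntegral ℤ ((e : ℝ) - f * √m)) :
    1 / 2 ≤ |f| := by
  have hsq : √(m : ℝ) ^ 2 = m := Real.sq_sqrt (Nat.cast_nonneg m)
  have htrace : ((e : ℝ) + f * √m) + ((e : ℝ) - f * √m) = ((2 * e : ℚ) : ℝ) := by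
    push_cast; ring
  have hnorm : ((e : ℝ) + f * √m) * ((e : ℝ) - f * √m) = ((e ^ 2 - f ^ 2 * m : ℚ) : ℝ) := by
    push_cast; linear_combination (-(f : ℝ) * f) * hsq
  obtain ⟨n₁, hn₁⟩ := Rat.exists_intCast_eq_of_isIntegral (htrace ▸ h₁.add h₂)
  obtain ⟨n₂, hn₂⟩ := Rat.exists_intCast_eq_of_isIntegral (hnorm ▸ h₁.mul h₂)
  obtain ⟨k, hk⟩ := exists_intCast_eq_of_squarefree_mul_sq hm (t := 2 * f)
    ⟨n₁ ^ 2 - 4 * n₂, by push_cast; rw [hn₁, hn₂]; ring⟩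
  have hk0 : k ≠ 0 := by rintro rfl; simp at hk; exact hf hk
  have h1k : (1 : ℚ) ≤ |(k : ℚ)| := by exact_mod_cast Int.one_le_abs hk0
  rw [hk, abs_mul, abs_two] at h1k
  linarith

theorem irrational_sqrt_natCast_of_squarefree {n : ℕ} (hn : Squarefree n) (h1 : n ≠ 1) :
    Irrational √n := by
  refine irrational_sqrt_natCast_iff.mpr fun ⟨k, hk⟩ => h1 ?_
  rw [hk, Nat.isUnit_iff.mp (hn k (hk ▸ dvd_rfl))]

theorem Nat.gcd_sq_dvd_mul (p q : ℕ) : Nat.gcd p q ^ 2 ∣ p * q :=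
  sq (Nat.gcd p q) ▸ Nat.mul_dvd_mul (Nat.gcd_dvd_left p q) (Nat.gcd_dvd_right p q)

theorem Nat.mul_div_gcd_sq (p q : ℕ) :
    p * q / Nat.gcd p q ^ 2 = (p / Nat.gcd p q) * (q / Nat.gcd p q) := by
  rw [Nat.div_mul_div_comm (Nat.gcd_dvd_left p q) (Nat.gcd_dvd_right p q), sq]

theorem Nat.squarefree_mul_div_gcd_sq {p q : ℕ} (hp : Squarefree p) (hq : Squarefree q) :
    Squarefree (p * q / Nat.gcd p q ^ 2) := by
  have hg : 0 < Nat.gcd p q := Nat.gcd_pos_of_pos_left q (Nat.pos_of_ne_zero hp.ne_zero)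
  rw [Nat.mul_div_gcd_sq]
  exact (Nat.squarefree_mul (Nat.coprime_div_gcd_div_gcd hg)).mpr
    ⟨hp.squarefree_of_dvd (Nat.div_dvd_of_dvd (Nat.gcd_dvd_left p q)),
      hq.squarefree_of_dvd (Nat.div_dvd_of_dvd (Nat.gcd_dvd_right p q))⟩

theorem Nat.mul_div_gcd_sq_ne_one {p q : ℕ} (hpq : p ≠ q) : p * q / Nat.gcd p q ^ 2 ≠ 1 := by
  rw [Nat.mul_div_gcd_sq]
  intro h
  obtain ⟨hp, hq⟩ := mul_eq_one.mp h
  have ep := Nat.mul_div_cancel' (Nat.gcd_dvd_left p q)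
  have eq := Nat.mul_div_cancel' (Nat.gcd_dvd_right p q)
  rw [hp] at ep
  rw [hq] at eq
  exact hpq (ep.symm.trans eq)

theorem sqrt_mul_sqrt_eq_gcd_mul (p q : ℕ) :
    √(p : ℝ) * √q = Nat.gcd p q * √(p * q / Nat.gcd p q ^ 2 : ℕ) := by
  rw [← Real.sqrt_mul (Nat.cast_nonneg _), ← Nat.cast_mul,
    ← Nat.mul_div_cancel' (Nat.gcd_sq_dvd_mul p q), Nat.cast_mul,
    Real.sqrt_mul (by positivity), Nat.cast_pow, Real.sqrt_sq (Nat.cast_nonneg _),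
    Nat.mul_div_cancel_left' (Nat.gcd_sq_dvd_mul p q)]

theorem sqrt_natCast_sq_eq_ratCast (n : ℕ) : √(n : ℝ) ^ 2 = ((n : ℚ) : ℝ) := by
  rw [Real.sq_sqrt (Nat.cast_nonneg _), Rat.cast_natCast]

theorem sq_eq_one_of_mem_sgn {s : ℤ} (hs : s ∈ Sgn) : (s : ℝ) ^ 2 = 1 := by
  rcases hs with rfl | rfl <;> norm_num

theorem one_mem_sgn : (1 : ℤ) ∈ Sgn := Or.inl rfl

theorem neg_one_mem_sgn : (-1 : ℤ) ∈ Sgn := Or.inr rfl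

theorem isIntegral_emb {p q r g : ℕ} (hg : g ≠ 0) (hpqr : √(p : ℝ) * √q = g * √r)
    (hip : Irrational √p) (hiq : Irrational √q) (hir : Irrational √r)
    {v : ℚ × ℚ × ℚ × ℚ} (hv : IsIntK p q r v) {s t : ℤ} (hs : s ∈ Sgn) (ht : t ∈ Sgn) :
    IsIntegral ℤ (emb p q r s t v) := by
  obtain ⟨a, b, c, d⟩ := v
  have hemb : ∀ s t : ℤ, emb p q r s t (a, b, c, d)
      = (a : ℝ) + b * (s * √p) + c * (t * √q) + ((d / g : ℚ) : ℝ) * ((s * √p) * (t * √q)) := by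
    intro s t
    have hg' : (g : ℝ) ≠ 0 := Nat.cast_ne_zero.mpr hg
    simp only [emb]
    rw [show (s * √(p : ℝ)) * (t * √q) = s * t * (√p * √q) by ring, hpqr]
    push_cast
    field_simp
  have hP := sqrt_natCast_sq_eq_ratCast p
  have hQ := sqrt_natCast_sq_eq_ratCast q
  have hsP : ((s : ℝ) * √p) ^ 2 = ((p : ℚ) : ℝ) := by
    rw [mul_pow, sq_eq_one_of_mem_sgn hs, one_mul, hP]
  have hsQ : ((t : ℝ) * √q) ^ 2 = ((q : ℚ) : ℝ) := by
    rw [mul_pow, sq_eq_one_of_mem_sgn ht, one_mul, hQ]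
  have hipq : Irrational (√(p : ℝ) * √q) := hpqr ▸ hir.natCast_mul hg
  have h11 := hemb 1 1
  simp only [Int.cast_one, one_mul] at h11
  rw [hemb]
  refine isIntegral_conj hP hsP hQ hsQ (fun a b c d h => ?_)
    (by rw [← h11]; exact hv)
  obtain ⟨rfl, rfl, rfl, rfl⟩ := eq_zero_of_add_mul_add_mul_add_mul_eq_zero hP hQ hip hiq hipq h
  simp

theorem TotPos.abs_lt {p q r : ℕ} {a b c d : ℚ} (h : TotPos p q r (a, b, c, d)) :
    |c * √(q : ℝ) + d * √r| < a + b * √p ∧ |c * √(q : ℝ) - d * √r| < a - b * √p := by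
  have h₁ := h 1 one_mem_sgn 1 one_mem_sgn
  have h₂ := h 1 one_mem_sgn (-1) neg_one_mem_sgn
  have h₃ := h (-1) neg_one_mem_sgn 1 one_mem_sgn
  have h₄ := h (-1) neg_one_mem_sgn (-1) neg_one_mem_sgn
  simp only [emb, Int.cast_one, Int.cast_neg] at h₁ h₂ h₃ h₄
  constructor <;> rw [_root_.abs_lt] <;> constructor <;> linarith

theorem abs_add_abs_lt_of_totPos {p q r : ℕ} {x y a b c d : ℚ} (hβ : TotPos p q r (a, b, c, d))
    (hγ : TotPos p q r (x - a, y - b, -c, -d)) :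
    |c * √(q : ℝ) + d * √r| + |c * √(q : ℝ) - d * √r| < x := by
  obtain ⟨hβ₁, hβ₂⟩ := hβ.abs_lt
  obtain ⟨hγ₁, hγ₂⟩ := hγ.abs_lt
  push_cast at hγ₁ hγ₂
  rw [show -(c : ℝ) * √q + -d * √r = -(c * √q + d * √r) by ring, abs_neg] at hγ₁
  rw [show -(c : ℝ) * √q - -d * √r = -(c * √q - d * √r) by ring, abs_neg] at hγ₂
  linarith

def QuadDecomposable (p : ℕ) (x y : ℚ) : Prop :=
  ∃ x₁ y₁ x₂ y₂ : ℚ,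
    IsIntegral ℤ ((x₁ : ℝ) + (y₁ : ℝ) * Real.sqrt p) ∧
    IsIntegral ℤ ((x₂ : ℝ) + (y₂ : ℝ) * Real.sqrt p) ∧
    (0 < (x₁ : ℝ) + (y₁ : ℝ) * Real.sqrt p ∧ 0 < (x₁ : ℝ) - (y₁ : ℝ) * Real.sqrt p) ∧
    (0 < (x₂ : ℝ) + (y₂ : ℝ) * Real.sqrt p ∧ 0 < (x₂ : ℝ) - (y₂ : ℝ) * Real.sqrt p) ∧
    x₁ + x₂ = x ∧ y₁ + y₂ = y

section Decomposition

variable {p q r : ℕ} {x y a b c d : ℚ}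

/-- For `q = 1` the field is `ℚ(√p)`, where `(a, b, c, d)` stands for `(a + c) + (b + d)√p`. -/
theorem quadDecomposable_of_q_eq_one (hβ : IsIntK p 1 p (a, b, c, d))
    (hγ : IsIntK p 1 p (x - a, y - b, -c, -d)) (hβ' : TotPos p 1 p (a, b, c, d))
    (hγ' : TotPos p 1 p (x - a, y - b, -c, -d)) : QuadDecomposable p x y := by
  have hβ₁ := hβ' 1 one_mem_sgn 1 one_mem_sgn
  have hβ₂ := hβ' (-1) neg_one_mem_sgn 1 one_mem_sgn
  have hγ₁ := hγ' 1 one_mem_sgn 1 one_mem_sgn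
  have hγ₂ := hγ' (-1) neg_one_mem_sgn 1 one_mem_sgn
  unfold IsIntK at hβ hγ
  simp only [emb, Int.cast_one, Int.cast_neg, Nat.cast_one, Real.sqrt_one] at hβ hγ hβ₁ hβ₂ hγ₁ hγ₂
  refine ⟨a + c, b + d, x - a - c, y - b - d, ?_, ?_, ⟨?_, ?_⟩, ⟨?_, ?_⟩, by ring, by ring⟩
  · convert hβ using 1; push_cast; ring
  · convert hγ using 1; push_cast; ring
  · push_cast; linarith
  · push_cast; linarith
  · push_cast at hγ₁ ⊢; linarith
  · push_cast at hγ₂ ⊢; linarith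

theorem quadDecomposable_of_add_eq_zero (hβ : IsIntK p q r (a, b, c, d))
    (hγ : IsIntK p q r (x - a, y - b, -c, -d)) (hβ' : TotPos p q r (a, b, c, d))
    (hγ' : TotPos p q r (x - a, y - b, -c, -d)) (h0 : c * √(q : ℝ) + d * √r = 0) :
    QuadDecomposable p x y := by
  obtain ⟨hβ₁, hβ₂⟩ := hβ'.abs_lt
  obtain ⟨hγ₁, hγ₂⟩ := hγ'.abs_lt
  unfold IsIntK at hβ hγ
  simp only [emb, Int.cast_one, one_mul] at hβ hγ
  push_cast at hγ hγ₁ hγ₂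
  refine ⟨a, b, x - a, y - b, ?_, ?_, ⟨?_, ?_⟩, ⟨?_, ?_⟩, by ring, by ring⟩
  · convert hβ using 1; linear_combination -h0
  · convert hγ using 1; push_cast; linear_combination h0
  · linarith [abs_nonneg (c * √(q : ℝ) + d * √r)]
  · linarith [abs_nonneg (c * √(q : ℝ) - d * √r)]
  · push_cast; linarith [abs_nonneg (-c * √(q : ℝ) + -d * √r)]
  · push_cast; linarith [abs_nonneg (-c * √(q : ℝ) - -d * √r)]

end Decomposition

theorem sqrt_le_two_mul_abs_of_isIntegral {m : ℕ} (hm : Squarefree m) {e f : ℚ} (hf : f ≠ 0)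
    (h₁ : IsIntegral ℤ ((e : ℝ) + f * √m)) (h₂ : IsIntegral ℤ ((e : ℝ) - f * √m)) :
    √(m : ℝ) ≤ 2 * |f * √(m : ℝ)| := by
  have hhalf : (1 / 2 : ℝ) ≤ |(f : ℝ)| := by
    have h := Rat.cast_le (K := ℝ) |>.mpr (half_le_abs_of_isIntegral hm hf h₁ h₂)
    push_cast at h
    exact h
  rw [abs_mul, abs_of_nonneg (Real.sqrt_nonneg _)]
  nlinarith [Real.sqrt_nonneg (m : ℝ)]

theorem sqrt_le_of_isIntK_of_p_eq_one {q : ℕ} (hq : Squarefree q) (hq1 : q ≠ 1) {a b c d : ℚ}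
    (hβ : IsIntK 1 q q (a, b, c, d)) (hcd : c * √(q : ℝ) + d * √q ≠ 0) :
    √(q : ℝ) ≤ 2 * |c * √(q : ℝ) + d * √q| := by
  have hiq := irrational_sqrt_natCast_of_squarefree hq hq1
  have hQ := sqrt_natCast_sq_eq_ratCast q
  have hinj : ∀ a b c d : ℚ, (a : ℝ) + b * 1 + c * √q + d * (1 * √q) = 0 →
      (a : ℝ) + b * 1 + c * -√q + d * (1 * -√q) = 0 := fun a b c d h => by
    obtain ⟨hcd, hab⟩ := hiq.eq_zero_of_ratCast_mul_eq (k := c + d) (m := -(a + b)) (by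
      push_cast; linear_combination h)
    have hcd : (c : ℝ) + d = 0 := by exact_mod_cast hcd
    have hab : (a : ℝ) + b = 0 := by exact_mod_cast neg_eq_zero.mp hab
    linear_combination hab - √(q : ℝ) * hcd
  have hα : IsIntegral ℤ ((a : ℝ) + b * 1 + c * √q + d * (1 * √q)) := by
    unfold IsIntK at hβ; convert hβ using 1; simp [emb]
  have hα' := isIntegral_conj (p := 1) (P := 1) (P' := 1) (Q' := -√q) (by norm_num) (by norm_num)
    hQ (by rw [neg_sq, hQ]) hinj hα
  have hcd' : c + d ≠ 0 := by
    intro hcd'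
    have hcd' : (c : ℝ) + d = 0 := by exact_mod_cast hcd'
    exact hcd (by linear_combination √(q : ℝ) * hcd')
  rw [show (c : ℝ) * √q + d * √q = ((c + d : ℚ) : ℝ) * √q by push_cast; ring]
  refine sqrt_le_two_mul_abs_of_isIntegral hq (e := a + b) hcd' ?_ ?_
  · convert hα using 1; push_cast; ring
  · convert hα' using 1; push_cast; ring

theorem sqrt_min_le_of_isIntK {p q r : ℕ} (hp : Squarefree p) (hq : Squarefree q) (hp1 : p ≠ 1)
    (hq1 : q ≠ 1) (hpq : p ≠ q) (hr : r = p * q / Nat.gcd p q ^ 2) {a b c d : ℚ}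
    (hβ : IsIntK p q r (a, b, c, d)) (hcd : c ≠ 0 ∨ d ≠ 0) :
    √((min q r : ℕ) : ℝ) ≤ 2 * (|c * √(q : ℝ) + d * √r| + |c * √(q : ℝ) - d * √r|) := by
  have hrsf : Squarefree r := hr ▸ Nat.squarefree_mul_div_gcd_sq hp hq
  have hir : Irrational √(r : ℝ) :=
    irrational_sqrt_natCast_of_squarefree hrsf (hr ▸ Nat.mul_div_gcd_sq_ne_one hpq)
  have hI : ∀ s ∈ Sgn, ∀ t ∈ Sgn, IsIntegral ℤ (emb p q r s t (a, b, c, d)) :=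
    fun s hs t ht => isIntegral_emb (Nat.gcd_pos_of_pos_left q hp.ne_zero.bot_lt).ne'
      (hr ▸ sqrt_mul_sqrt_eq_gcd_mul p q) (irrational_sqrt_natCast_of_squarefree hp hp1)
      (irrational_sqrt_natCast_of_squarefree hq hq1) hir hβ hs ht
  have h₁ := hI 1 one_mem_sgn 1 one_mem_sgn
  have h₂ := hI 1 one_mem_sgn (-1) neg_one_mem_sgn
  have h₃ := hI (-1) neg_one_mem_sgn 1 one_mem_sgn
  have h₄ := hI (-1) neg_one_mem_sgn (-1) neg_one_mem_sgn
  simp only [emb, Int.cast_one, Int.cast_neg] at h₁ h₂ h₃ h₄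
  have hsum : ∀ {u v w : ℝ}, IsIntegral ℤ u → IsIntegral ℤ v → u + v = w → IsIntegral ℤ w :=
    fun hu hv h => h ▸ hu.add hv
  rcases hcd with hc | hd
  · -- the traces to `ℚ(√q)` are `2a ± 2c√q`
    have h := sqrt_le_two_mul_abs_of_isIntegral hq (e := 2 * a) (f := 2 * c) (by simpa using hc)
      (hsum h₁ h₃ (by push_cast; ring)) (hsum h₂ h₄ (by push_cast; ring))
    calc √((min q r : ℕ) : ℝ) ≤ √(q : ℝ) := Real.sqrt_le_sqrt (by exact_mod_cast min_le_left q r)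
      _ ≤ 2 * |((2 * c : ℚ) : ℝ) * √(q : ℝ)| := h
      _ = 2 * |(c * √(q : ℝ) + d * √r) + (c * √(q : ℝ) - d * √r)| := by push_cast; ring_nf
      _ ≤ _ := by gcongr; exact abs_add_le _ _
  · -- the traces to `ℚ(√r)` are `2a ± 2d√r`
    have h := sqrt_le_two_mul_abs_of_isIntegral hrsf (e := 2 * a) (f := 2 * d) (by simpa using hd)
      (hsum h₁ h₄ (by push_cast; ring)) (hsum h₂ h₃ (by push_cast; ring))
    calc √((min q r : ℕ) : ℝ) ≤ √(r : ℝ) := Real.sqrt_le_sqrt (by exact_mod_cast min_le_right q r)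
      _ ≤ 2 * |((2 * d : ℚ) : ℝ) * √(r : ℝ)| := h
      _ = 2 * |(c * √(q : ℝ) + d * √r) - (c * √(q : ℝ) - d * √r)| := by push_cast; ring_nf
      _ ≤ _ := by gcongr; exact abs_sub _ _

theorem stmt_4_general (p q r : ℕ) (hp : Squarefree p) (hq : Squarefree q) (hpq : p ≠ q)
    (hr : r = p * q / (Nat.gcd p q) ^ 2)
    (x y : ℚ)
    (hindq : ¬ ∃ x₁ y₁ x₂ y₂ : ℚ,
      IsIntegral ℤ ((x₁ : ℝ) + (y₁ : ℝ) * Real.sqrt p) ∧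
      IsIntegral ℤ ((x₂ : ℝ) + (y₂ : ℝ) * Real.sqrt p) ∧
      (0 < (x₁ : ℝ) + (y₁ : ℝ) * Real.sqrt p ∧ 0 < (x₁ : ℝ) - (y₁ : ℝ) * Real.sqrt p) ∧
      (0 < (x₂ : ℝ) + (y₂ : ℝ) * Real.sqrt p ∧ 0 < (x₂ : ℝ) - (y₂ : ℝ) * Real.sqrt p) ∧
      x₁ + x₂ = x ∧ y₁ + y₂ = y)
    (hdec : ∃ β γ : ℚ × ℚ × ℚ × ℚ, IsIntK p q r β ∧ IsIntK p q r γ ∧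
      TotPos p q r β ∧ TotPos p q r γ ∧ β + γ = (x, y, 0, 0)) :
    ((min q r : ℕ) : ℚ) < 16 * x ^ 2 := by
  obtain ⟨⟨a, b, c, d⟩, γ, hβ, hγ, hβ', hγ', hsum⟩ := hdec
  obtain rfl : γ = (x - a, y - b, -c, -d) := by rw [eq_sub_of_add_eq' hsum]; simp
  have hupper := abs_add_abs_lt_of_totPos hβ' hγ'
  rcases eq_or_ne q 1 with rfl | hq1
  · obtain rfl : r = p := by simp [hr]
    exact absurd (quadDecomposable_of_q_eq_one hβ hγ hβ' hγ') hindq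
  by_cases h0 : c * √(q : ℝ) + d * √r = 0
  · exact absurd (quadDecomposable_of_add_eq_zero hβ hγ hβ' hγ' h0) hindq
  have hlower : √((min q r : ℕ) : ℝ) ≤ 2 * (|c * √(q : ℝ) + d * √r| + |c * √(q : ℝ) - d * √r|) := by
    rcases eq_or_ne p 1 with rfl | hp1
    · obtain rfl : r = q := by simp [hr]
      rw [min_self]
      linarith [sqrt_le_of_isIntK_of_p_eq_one hq hq1 hβ h0, abs_nonneg (c * √(r : ℝ) - d * √r)]
    · refine sqrt_min_le_of_isIntK hp hq hp1 hq1 hpq hr hβ (not_and_or.mp fun hcd => h0 ?_)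
      simp [hcd]
  have hx : √((min q r : ℕ) : ℝ) < 2 * x := by linarith
  have hmin : ((min q r : ℕ) : ℝ) < (2 * x) ^ 2 :=
    (Real.sqrt_lt' (by linarith [Real.sqrt_nonneg ((min q r : ℕ) : ℝ)])).mp hx
  have : ((min q r : ℕ) : ℝ) < 16 * (x : ℝ) ^ 2 := by nlinarith
  exact_mod_cast this

theorem stmt_4 (p q r : ℕ) (hp : Squarefree p) (hq : Squarefree q) (hpq : p ≠ q)
    (hp0 : 0 < p) (hq0 : 0 < q) (hr : r = p * q / (Nat.gcd p q) ^ 2)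
    (x y : ℚ) (hx : ∃ m : ℤ, x = m / 2) (hy : ∃ m : ℤ, y = m / 2)
    (hint : IsIntegral ℤ ((x : ℝ) + (y : ℝ) * Real.sqrt p))
    (hposq : 0 < (x : ℝ) + (y : ℝ) * Real.sqrt p ∧ 0 < (x : ℝ) - (y : ℝ) * Real.sqrt p)
    (hindq : ¬ ∃ x₁ y₁ x₂ y₂ : ℚ,
      IsIntegral ℤ ((x₁ : ℝ) + (y₁ : ℝ) * Real.sqrt p) ∧
      IsIntegral ℤ ((x₂ : ℝ) + (y₂ : ℝ) * Real.sqrt p) ∧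
      (0 < (x₁ : ℝ) + (y₁ : ℝ) * Real.sqrt p ∧ 0 < (x₁ : ℝ) - (y₁ : ℝ) * Real.sqrt p) ∧
      (0 < (x₂ : ℝ) + (y₂ : ℝ) * Real.sqrt p ∧ 0 < (x₂ : ℝ) - (y₂ : ℝ) * Real.sqrt p) ∧
      x₁ + x₂ = x ∧ y₁ + y₂ = y)
    (hdec : ∃ β γ : ℚ × ℚ × ℚ × ℚ, IsIntK p q r β ∧ IsIntK p q r γ ∧
      TotPos p q r β ∧ TotPos p q r γ ∧ β + γ = (x, y, 0, 0)) :
    ((min q r : ℕ) : ℚ) < 16 * x ^ 2 :=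
  stmt_4_general p q r hp hq hpq hr x y hindq hdec
end

section
/- Let K = Q(√p,√q) be a totally real biquadratic field with r = pq/gcd(p,q)², and let α, β ∈ O_K with β = a + b√p + c√q + d√r (a,b,c,d ∈ Q). If 0 ≺ β ≺ α (β and α − β totally positive), then |a| ≤ Tr(α)/4, |b| ≤ Tr(α)/(4√p), |c| ≤ Tr(α)/(4√q), and |d| ≤ Tr(α)/(4√r). -/
/-!
Each coefficient of `β = a + b√p + c√q + d√r` is a signed average of its four embeddings
(orthogonality of the characters of the Klein four-group `Gal(K/ℚ)`): for instance
`4b√p = Σ s · σ_{s,t}(β)`. Since `0 < σ(β) < σ(α)` for every embedding `σ`, any such signed sum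
is bounded in absolute value by `Σ σ(α) = Tr α = 4A`.
-/

def signPairs : Finset (ℤ × ℤ) := {1, -1} ×ˢ {1, -1}

lemma mem_Sgn_of_mem_signPairs {st : ℤ × ℤ} (h : st ∈ signPairs) : st.1 ∈ Sgn ∧ st.2 ∈ Sgn := by
  simpa [signPairs, Sgn] using h

lemma abs_sign_le_one {st : ℤ × ℤ} (h : st ∈ signPairs) :
    |(st.1 : ℝ)| ≤ 1 ∧ |(st.2 : ℝ)| ≤ 1 ∧ |(st.1 * st.2 : ℝ)| ≤ 1 := by
  obtain ⟨s, t⟩ := st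
  simp only [signPairs, Finset.mem_product, Finset.mem_insert, Finset.mem_singleton] at h
  rcases h with ⟨rfl | rfl, rfl | rfl⟩ <;> norm_num

lemma emb_sub (p q r : ℕ) (s t : ℤ) (v w : ℚ × ℚ × ℚ × ℚ) :
    emb p q r s t (v - w) = emb p q r s t v - emb p q r s t w := by
  simp only [emb, Prod.fst_sub, Prod.snd_sub, Rat.cast_sub]
  ring

lemma TotPos.emb_lt {p q r : ℕ} {v w : ℚ × ℚ × ℚ × ℚ} (h : TotPos p q r (v - w))
    {s t : ℤ} (hs : s ∈ Sgn) (ht : t ∈ Sgn) : emb p q r s t w < emb p q r s t v := by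
  simpa [emb_sub] using h s hs t ht

lemma sum_emb (p q r : ℕ) (v : ℚ × ℚ × ℚ × ℚ) :
    ∑ st ∈ signPairs, emb p q r st.1 st.2 v = 4 * v.1 := by
  simp only [signPairs, Finset.sum_product, Finset.sum_pair (by decide : (1 : ℤ) ≠ -1), emb]
  push_cast
  ring

lemma sum_fst_mul_emb (p q r : ℕ) (v : ℚ × ℚ × ℚ × ℚ) :
    ∑ st ∈ signPairs, (st.1 : ℝ) * emb p q r st.1 st.2 v = 4 * Real.sqrt p * v.2.1 := by
  simp only [signPairs, Finset.sum_product, Finset.sum_pair (by decide : (1 : ℤ) ≠ -1), emb]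
  push_cast
  ring

lemma sum_snd_mul_emb (p q r : ℕ) (v : ℚ × ℚ × ℚ × ℚ) :
    ∑ st ∈ signPairs, (st.2 : ℝ) * emb p q r st.1 st.2 v = 4 * Real.sqrt q * v.2.2.1 := by
  simp only [signPairs, Finset.sum_product, Finset.sum_pair (by decide : (1 : ℤ) ≠ -1), emb]
  push_cast
  ring

lemma sum_fst_mul_snd_mul_emb (p q r : ℕ) (v : ℚ × ℚ × ℚ × ℚ) :
    ∑ st ∈ signPairs, (st.1 * st.2 : ℝ) * emb p q r st.1 st.2 v = 4 * Real.sqrt r * v.2.2.2 := by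
  simp only [signPairs, Finset.sum_product, Finset.sum_pair (by decide : (1 : ℤ) ≠ -1), emb]
  push_cast
  ring

lemma abs_sum_mul_le_sum {ι : Type*} (s : Finset ι) {ε x y : ι → ℝ}
    (hε : ∀ i ∈ s, |ε i| ≤ 1) (hx : ∀ i ∈ s, 0 ≤ x i) (hxy : ∀ i ∈ s, x i ≤ y i) :
    |∑ i ∈ s, ε i * x i| ≤ ∑ i ∈ s, y i := by
  refine (Finset.abs_sum_le_sum_abs _ _).trans (Finset.sum_le_sum fun i hi => ?_)
  calc |ε i * x i| = |ε i| * x i := by rw [abs_mul, abs_of_nonneg (hx i hi)]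
    _ ≤ 1 * x i := mul_le_mul_of_nonneg_right (hε i hi) (hx i hi)
    _ ≤ y i := by linarith [hxy i hi]

lemma abs_sum_mul_emb_le {p q r : ℕ} {α β : ℚ × ℚ × ℚ × ℚ}
    (hβ : TotPos p q r β) (hαβ : TotPos p q r (α - β)) (ε : ℤ × ℤ → ℝ)
    (hε : ∀ st ∈ signPairs, |ε st| ≤ 1) :
    |∑ st ∈ signPairs, ε st * emb p q r st.1 st.2 β| ≤ 4 * α.1 := by
  rw [← sum_emb p q r α]
  refine abs_sum_mul_le_sum _ hε (fun st hst => ?_) (fun st hst => ?_)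
  · obtain ⟨hs, ht⟩ := mem_Sgn_of_mem_signPairs hst
    exact (hβ _ hs _ ht).le
  · obtain ⟨hs, ht⟩ := mem_Sgn_of_mem_signPairs hst
    exact (hαβ.emb_lt hs ht).le

lemma abs_le_div_of_abs_mul_le {u x A : ℝ} (hu : 0 < u) (h : |u * x| ≤ A) : |x| ≤ A / u := by
  rw [le_div_iff₀ hu]
  rwa [abs_mul, abs_of_pos hu, mul_comm] at h

lemma mul_div_gcd_sq_pos {p q : ℕ} (hp : 0 < p) (hq : 0 < q) : 0 < p * q / Nat.gcd p q ^ 2 :=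
  Nat.div_pos
    (sq (Nat.gcd p q) ▸
      Nat.mul_le_mul (Nat.gcd_le_left q hp) (Nat.gcd_le_right (m := p) (n := q) hq))
    (pow_pos (Nat.gcd_pos_of_pos_left q hp) 2)

theorem stmt_7_general (p q r : ℕ) (hp0 : 0 < p) (hq0 : 0 < q) (hr : r = p * q / (Nat.gcd p q) ^ 2)
    (A B C D a b c d : ℚ)
    (h1 : TotPos p q r (a, b, c, d))
    (h2 : TotPos p q r ((A, B, C, D) - (a, b, c, d))) :
    |(a : ℝ)| ≤ 4 * (A : ℝ) / 4 ∧
    |(b : ℝ)| ≤ 4 * (A : ℝ) / (4 * Real.sqrt p) ∧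
    |(c : ℝ)| ≤ 4 * (A : ℝ) / (4 * Real.sqrt q) ∧
    |(d : ℝ)| ≤ 4 * (A : ℝ) / (4 * Real.sqrt r) := by
  have hr0 : 0 < r := hr ▸ mul_div_gcd_sq_pos hp0 hq0
  have bound := abs_sum_mul_emb_le h1 h2
  refine ⟨?_, ?_, ?_, ?_⟩
  · refine abs_le_div_of_abs_mul_le four_pos ?_
    simpa [sum_emb] using bound (fun _ => 1) (by simp)
  · refine abs_le_div_of_abs_mul_le (by positivity) ?_
    simpa [sum_fst_mul_emb] using bound (fun st => st.1) (fun st h => (abs_sign_le_one h).1)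
  · refine abs_le_div_of_abs_mul_le (by positivity) ?_
    simpa [sum_snd_mul_emb] using bound (fun st => st.2) (fun st h => (abs_sign_le_one h).2.1)
  · refine abs_le_div_of_abs_mul_le (by positivity) ?_
    simpa [sum_fst_mul_snd_mul_emb] using
      bound (fun st => st.1 * st.2) (fun st h => (abs_sign_le_one h).2.2)

theorem stmt_7 (p q r : ℕ) (hp : Squarefree p) (hq : Squarefree q) (hpq : p ≠ q)
    (hp0 : 0 < p) (hq0 : 0 < q) (hr : r = p * q / (Nat.gcd p q) ^ 2)
    (A B C D a b c d : ℚ)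
    (hA : IsIntK p q r (A, B, C, D)) (hB : IsIntK p q r (a, b, c, d))
    (h1 : TotPos p q r (a, b, c, d))
    (h2 : TotPos p q r ((A, B, C, D) - (a, b, c, d))) :
    |(a : ℝ)| ≤ 4 * (A : ℝ) / 4 ∧
    |(b : ℝ)| ≤ 4 * (A : ℝ) / (4 * Real.sqrt p) ∧
    |(c : ℝ)| ≤ 4 * (A : ℝ) / (4 * Real.sqrt q) ∧
    |(d : ℝ)| ≤ 4 * (A : ℝ) / (4 * Real.sqrt r) :=
  stmt_7_general p q r hp0 hq0 hr A B C D a b c d h1 h2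
end

section
/- Let K = Q(√p,√q) with r = pq/gcd(p,q)², and let α, β ∈ O_K with β = a + b√p + c√q + d√r. If β² ≺ α (i.e., α − β² is totally positive), then a² ≤ Tr(α)/4, b² ≤ Tr(α)/(4p), c² ≤ Tr(α)/(4q), and d² ≤ Tr(α)/(4r). -/
/-!
Summing the four real embeddings computes the trace: the irrational parts of `α` and the cross
terms of `β²` carry a factor `s`, `t` or `st` and cancel, so `Tr α = 4A` and
`Tr β² = 4(a² + pb² + qc² + rd²)`. Total positivity of `α - β²` gives `Tr β² < Tr α`, and each
of the four nonnegative summands `a², pb², qc², rd²` is then at most `A`.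
-/

lemma sum_emb_eq_four_mul_fst (p q r : ℕ) (v : ℚ × ℚ × ℚ × ℚ) :
    emb p q r 1 1 v + emb p q r 1 (-1) v + emb p q r (-1) 1 v + emb p q r (-1) (-1) v
      = 4 * v.1 := by
  simp only [emb]
  push_cast
  ring

lemma sum_emb_sq_eq_four_mul (p q r : ℕ) (a b c d : ℚ) :
    emb p q r 1 1 (a, b, c, d) ^ 2 + emb p q r 1 (-1) (a, b, c, d) ^ 2
      + emb p q r (-1) 1 (a, b, c, d) ^ 2 + emb p q r (-1) (-1) (a, b, c, d) ^ 2
      = 4 * ((a : ℝ) ^ 2 + p * b ^ 2 + q * c ^ 2 + r * d ^ 2) := by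
  have hp : Real.sqrt p ^ 2 = p := Real.sq_sqrt p.cast_nonneg
  have hq : Real.sqrt q ^ 2 = q := Real.sq_sqrt q.cast_nonneg
  have hr : Real.sqrt r ^ 2 = r := Real.sq_sqrt r.cast_nonneg
  simp only [emb]
  push_cast
  linear_combination 4 * (b : ℝ) ^ 2 * hp + 4 * (c : ℝ) ^ 2 * hq + 4 * (d : ℝ) ^ 2 * hr

lemma sum_sq_lt_of_forall_emb_sub_sq_pos (p q r : ℕ) (α : ℚ × ℚ × ℚ × ℚ) (a b c d : ℚ)
    (h : ∀ s ∈ Sgn, ∀ t ∈ Sgn, 0 < emb p q r s t α - emb p q r s t (a, b, c, d) ^ 2) :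
    (a : ℝ) ^ 2 + p * b ^ 2 + q * c ^ 2 + r * d ^ 2 < α.1 := by
  have h1 : (1 : ℤ) ∈ Sgn := Or.inl rfl
  have hm1 : (-1 : ℤ) ∈ Sgn := Or.inr rfl
  linarith [h 1 h1 1 h1, h 1 h1 (-1) hm1, h (-1) hm1 1 h1, h (-1) hm1 (-1) hm1,
    sum_emb_eq_four_mul_fst p q r α, sum_emb_sq_eq_four_mul p q r a b c d]

lemma sq_le_four_mul_div_of_mul_sq_le {n x A : ℝ} (hn : 0 < n) (h : n * x ^ 2 ≤ A) :
    x ^ 2 ≤ 4 * A / (4 * n) := by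
  rw [mul_div_mul_left A n four_ne_zero, le_div_iff₀' hn]
  exact h

theorem stmt_8_general (p q r : ℕ)
    (hp0 : 0 < p) (hq0 : 0 < q) (hr : r = p * q / (Nat.gcd p q) ^ 2)
    (A B C D a b c d : ℚ)
    (h2 : ∀ s ∈ Sgn, ∀ t ∈ Sgn,
      0 < emb p q r s t (A, B, C, D) - (emb p q r s t (a, b, c, d)) ^ 2) :
    (a : ℝ) ^ 2 ≤ 4 * (A : ℝ) / 4 ∧
    (b : ℝ) ^ 2 ≤ 4 * (A : ℝ) / (4 * (p : ℝ)) ∧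
    (c : ℝ) ^ 2 ≤ 4 * (A : ℝ) / (4 * (q : ℝ)) ∧
    (d : ℝ) ^ 2 ≤ 4 * (A : ℝ) / (4 * (r : ℝ)) := by
  have hr0 : 0 < r := hr ▸ mul_div_gcd_sq_pos hp0 hq0
  have hsum := sum_sq_lt_of_forall_emb_sub_sq_pos p q r (A, B, C, D) a b c d h2
  have ha := sq_nonneg (a : ℝ)
  have hb := mul_nonneg (Nat.cast_nonneg p : (0 : ℝ) ≤ p) (sq_nonneg (b : ℝ))
  have hc := mul_nonneg (Nat.cast_nonneg q : (0 : ℝ) ≤ q) (sq_nonneg (c : ℝ))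
  have hd := mul_nonneg (Nat.cast_nonneg r : (0 : ℝ) ≤ r) (sq_nonneg (d : ℝ))
  refine ⟨by linarith, ?_, ?_, ?_⟩
  · exact sq_le_four_mul_div_of_mul_sq_le (by exact_mod_cast hp0) (by linarith)
  · exact sq_le_four_mul_div_of_mul_sq_le (by exact_mod_cast hq0) (by linarith)
  · exact sq_le_four_mul_div_of_mul_sq_le (by exact_mod_cast hr0) (by linarith)

theorem stmt_8 (p q r : ℕ) (hp : Squarefree p) (hq : Squarefree q) (hpq : p ≠ q)
    (hp0 : 0 < p) (hq0 : 0 < q) (hr : r = p * q / (Nat.gcd p q) ^ 2)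
    (A B C D a b c d : ℚ)
    (hA : IsIntK p q r (A, B, C, D)) (hB : IsIntK p q r (a, b, c, d))
    (h2 : ∀ s ∈ Sgn, ∀ t ∈ Sgn,
      0 < emb p q r s t (A, B, C, D) - (emb p q r s t (a, b, c, d)) ^ 2) :
    (a : ℝ) ^ 2 ≤ 4 * (A : ℝ) / 4 ∧
    (b : ℝ) ^ 2 ≤ 4 * (A : ℝ) / (4 * (p : ℝ)) ∧
    (c : ℝ) ^ 2 ≤ 4 * (A : ℝ) / (4 * (q : ℝ)) ∧
    (d : ℝ) ^ 2 ≤ 4 * (A : ℝ) / (4 * (r : ℝ)) :=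
  stmt_8_general p q r hp0 hq0 hr A B C D a b c d h2
end

section
/- Let K be a totally real number field and suppose α_1, …, α_n ∈ O_K are totally positive elements such that for all i ≠ j, the only γ ∈ O_K with α_i α_j − γ² totally nonnegative is γ = 0. Then there is no universal totally positive definite classical quadratic form over O_K in n − 1 variables. -/
open NumberField Matrix

/-! By universality each `α i` is `Q (v i)` for some vector `v i`, where `Q v = v ⬝ᵥ M *ᵥ v`.
Every real embedding turns `M` into a positive definite matrix, so Cauchy–Schwarz makes
`α i * α j - (v i ⬝ᵥ M *ᵥ v j) ^ 2` totally nonnegative, and the hypothesis forces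
`v i ⬝ᵥ M *ᵥ v j = 0` for `i ≠ j`. Pairwise orthogonal vectors with `Q (v i) = α i ≠ 0` are
linearly independent, which is impossible for `n` vectors in a free module of rank `n - 1`. -/

theorem RingHom.map_dotProduct_mulVec {R S m : Type*} [Fintype m] [CommSemiring R]
    [CommSemiring S] (f : R →+* S) (M : Matrix m m R) (u w : m → R) :
    f (u ⬝ᵥ M *ᵥ w) = f ∘ u ⬝ᵥ M.map f *ᵥ (f ∘ w) := by
  rw [f.map_dotProduct]
  congr 1
  funext i
  exact f.map_mulVec M w i

theorem Matrix.PosSemidef.dotProduct_mulVec_sq_le {m : Type*} [Fintype m] {A : Matrix m m ℝ}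
    (hA : A.PosSemidef) (u w : m → ℝ) :
    (u ⬝ᵥ A *ᵥ w) ^ 2 ≤ (u ⬝ᵥ A *ᵥ u) * (w ⬝ᵥ A *ᵥ w) := by
  let _ := A.toSeminormedAddCommGroup hA
  let _ := A.toInnerProductSpace hA
  have hinner : ∀ x y : m → ℝ, inner ℝ x y = x ⬝ᵥ A *ᵥ y := fun x y => by
    change (A *ᵥ y) ⬝ᵥ star x = _
    rw [star_trivial, dotProduct_comm]
  rw [sq, ← hinner, ← hinner, ← hinner]
  exact real_inner_mul_inner_self_le u w

theorem Matrix.linearIndependent_of_dotProduct_mulVec {F ι m : Type*} [Field F] [Fintype m]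
    [DecidableEq m]
    (A : Matrix m m F) (v : ι → m → F) (horth : ∀ i j, i ≠ j → v i ⬝ᵥ A *ᵥ v j = 0)
    (hdiag : ∀ i, v i ⬝ᵥ A *ᵥ v i ≠ 0) : LinearIndependent F v :=
  LinearMap.BilinForm.linearIndependent_of_iIsOrtho (B := A.toBilin')
    (fun i j hij => by simpa [toBilin'_apply'] using horth i j hij)
    (fun i => by simpa [toBilin'_apply'] using hdiag i)

theorem Matrix.card_le_of_dotProduct_mulVec {R ι m : Type*} [CommRing R] [IsDomain R]
    [Fintype ι] [Fintype m]
    (A : Matrix m m R) (v : ι → m → R) (horth : ∀ i j, i ≠ j → v i ⬝ᵥ A *ᵥ v j = 0)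
    (hdiag : ∀ i, v i ⬝ᵥ A *ᵥ v i ≠ 0) : Fintype.card ι ≤ Fintype.card m := by
  classical
  let f := algebraMap R (FractionRing R)
  have hf : Function.Injective f := IsFractionRing.injective R (FractionRing R)
  have hli := (A.map f).linearIndependent_of_dotProduct_mulVec (fun i => f ∘ v i)
    (fun i j hij => by rw [← f.map_dotProduct_mulVec, horth i j hij, map_zero])
    (fun i => by rw [← f.map_dotProduct_mulVec]; exact (map_ne_zero_iff f hf).mpr (hdiag i))
  simpa using hli.fintype_card_le_finrank

theorem nonempty_ringHom_real_of_forall_im_eq_zero {K : Type*} [Field K]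
    (htr : ∀ φ : K →+* ℂ, ∀ x : K, (φ x).im = 0) [Nonempty (K →+* ℂ)] :
    Nonempty (K →+* ℝ) := by
  obtain ⟨ψ⟩ := ‹Nonempty (K →+* ℂ)›
  have hψ : ComplexEmbedding.IsReal ψ := ComplexEmbedding.isReal_iff.mpr <|
    RingHom.ext fun x => Complex.conj_eq_iff_im.mpr (htr ψ x)
  exact ⟨hψ.embedding⟩

theorem dotProduct_mulVec_eq_zero_of_totallyNonneg_imp_eq_zero {K m : Type*} [Field K]
    [Fintype m]
    (M : Matrix m m (𝓞 K)) (hM : ∀ φ : K →+* ℝ, (M.map (fun x => φ (x : K))).PosSemidef)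
    (u w : m → 𝓞 K)
    (h : ∀ γ : 𝓞 K, (∀ φ : K →+* ℝ,
      0 ≤ φ (((u ⬝ᵥ M *ᵥ u : 𝓞 K) : K) * ((w ⬝ᵥ M *ᵥ w : 𝓞 K) : K) - (γ : K) ^ 2)) → γ = 0) :
    u ⬝ᵥ M *ᵥ w = 0 := by
  refine h _ fun φ => ?_
  let f := φ.comp (algebraMap (𝓞 K) K)
  have hf : ∀ x : 𝓞 K, φ (x : K) = f x := fun _ => rfl
  rw [map_sub, map_mul, map_pow, hf, hf, hf, f.map_dotProduct_mulVec, f.map_dotProduct_mulVec,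
    f.map_dotProduct_mulVec, sub_nonneg]
  exact (hM φ).dotProduct_mulVec_sq_le _ _

theorem stmt_11 (K : Type*) [Field K] [NumberField K]
    (htr : ∀ φ : K →+* ℂ, ∀ x : K, (φ x).im = 0)
    (n : ℕ) (α : Fin n → 𝓞 K)
    (hpos : ∀ i, ∀ φ : K →+* ℝ, 0 < φ (α i : K))
    (hkey : ∀ i j, i ≠ j → ∀ γ : 𝓞 K,
      (∀ φ : K →+* ℝ, 0 ≤ φ ((α i : K) * (α j : K) - (γ : K) ^ 2)) → γ = 0) :
    ¬ ∃ M : Matrix (Fin (n - 1)) (Fin (n - 1)) (𝓞 K),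
      (∀ i j, M i j = M j i) ∧
      (∀ φ : K →+* ℝ, (M.map (fun x => φ (x : K))).PosDef) ∧
      (∀ δ : 𝓞 K, (∀ φ : K →+* ℝ, 0 < φ (δ : K)) →
        ∃ v : Fin (n - 1) → 𝓞 K, δ = dotProduct v (M.mulVec v)) := by
  rintro ⟨M, -, hM, huniv⟩
  rcases Nat.eq_zero_or_pos n with rfl | hn
  · obtain ⟨v, hv⟩ := huniv 1 fun φ => by simp
    exact one_ne_zero (hv.trans (by simp))
  obtain ⟨φ₀⟩ := nonempty_ringHom_real_of_forall_im_eq_zero htr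
  choose v hv using fun i => huniv (α i) (hpos i)
  have horth : ∀ i j, i ≠ j → v i ⬝ᵥ M *ᵥ v j = 0 := fun i j hij =>
    dotProduct_mulVec_eq_zero_of_totallyNonneg_imp_eq_zero M (fun φ => (hM φ).posSemidef) _ _
      (by simpa only [hv] using hkey i j hij)
  have hdiag : ∀ i, v i ⬝ᵥ M *ᵥ v i ≠ 0 := fun i h =>
    (hpos i φ₀).ne' (by simp [hv i, h])
  have hcard := M.card_le_of_dotProduct_mulVec v horth hdiag
  rw [Fintype.card_fin, Fintype.card_fin] at hcard
  omega
end

section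
/- Let K be a totally real number field, Q(x) = Σ_i α_i x_i² a diagonal totally positive definite quadratic form over O_K, and β ∈ O_K an indecomposable totally positive element. Then β is represented by Q over O_K if and only if there exists an index i such that β/α_i is a square in O_K. -/
/-! If `β = ∑ αᵢ vᵢ²` with two nonzero coordinates `vᵢ, vⱼ`, then splitting off the term
`αᵢ vᵢ²` writes `β` as a sum of two totally positive integers, since every term is totally
nonnegative and the nonzero ones are totally positive. So an indecomposable `β` has at most one
nonzero coordinate, and at least one because `0 = 0 + 0` is decomposable. -/

open NumberField

namespace NumberField.RingOfIntegers

variable {K : Type*} [Field K]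

def IsTotallyPositive (x : 𝓞 K) : Prop :=
  ∀ φ : K →+* ℝ, 0 < φ (x : K)

def IsIndecomposable (β : 𝓞 K) : Prop :=
  IsTotallyPositive β ∧
    ¬ ∃ x y : 𝓞 K, IsTotallyPositive x ∧ IsTotallyPositive y ∧ β = x + y

theorem IsIndecomposable.ne_zero {β : 𝓞 K} (hβ : IsIndecomposable β) : β ≠ 0 := by
  rintro rfl
  exact hβ.2 ⟨0, 0, hβ.1, hβ.1, (add_zero 0).symm⟩

theorem map_mul_sq_nonneg {α : 𝓞 K} (hα : IsTotallyPositive α) (v : 𝓞 K) (φ : K →+* ℝ) :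
    0 ≤ φ ((α * v ^ 2 : 𝓞 K) : K) := by
  push_cast
  rw [map_mul, map_pow]
  exact mul_nonneg (hα φ).le (sq_nonneg _)

theorem IsTotallyPositive.mul_sq {α v : 𝓞 K} (hα : IsTotallyPositive α) (hv : v ≠ 0) :
    IsTotallyPositive (α * v ^ 2) := by
  intro φ
  have hφv : φ (v : K) ≠ 0 := by simpa using hv
  push_cast
  rw [map_mul, map_pow]
  exact mul_pos (hα φ) (by positivity)

theorem isTotallyPositive_sum_mul_sq {ι : Type*} {s : Finset ι} {α v : ι → 𝓞 K}
    (hα : ∀ i ∈ s, IsTotallyPositive (α i)) {j : ι} (hj : j ∈ s) (hvj : v j ≠ 0) :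
    IsTotallyPositive (∑ i ∈ s, α i * v i ^ 2) := by
  intro φ
  rw [show ((∑ i ∈ s, α i * v i ^ 2 : 𝓞 K) : K) = ∑ i ∈ s, ((α i * v i ^ 2 : 𝓞 K) : K) from
    map_sum (algebraMap (𝓞 K) K) _ _, map_sum]
  exact Finset.sum_pos' (fun i hi => map_mul_sq_nonneg (hα i hi) (v i) φ)
    ⟨j, hj, (hα j hj).mul_sq hvj φ⟩

theorem IsIndecomposable.exists_eq_mul_sq_of_eq_sum {ι : Type*} [Fintype ι] [DecidableEq ι]
    {β : 𝓞 K} (hβ : IsIndecomposable β) {α : ι → 𝓞 K} (hα : ∀ i, IsTotallyPositive (α i))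
    {v : ι → 𝓞 K} (hv : β = ∑ i, α i * v i ^ 2) : ∃ i, β = α i * v i ^ 2 := by
  obtain ⟨i, hi⟩ : ∃ i, v i ≠ 0 := by
    by_contra! h
    exact hβ.ne_zero (by simp [hv, h])
  refine ⟨i, ?_⟩
  rw [hv, ← Finset.add_sum_erase _ _ (Finset.mem_univ i)]
  by_cases hrest : ∃ j ∈ Finset.univ.erase i, v j ≠ 0
  · obtain ⟨j, hj, hvj⟩ := hrest
    refine (hβ.2 ⟨_, _, (hα i).mul_sq hi,
      isTotallyPositive_sum_mul_sq (fun k _ => hα k) hj hvj, ?_⟩).elim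
    rw [hv, ← Finset.add_sum_erase _ _ (Finset.mem_univ i)]
  · push Not at hrest
    rw [Finset.sum_eq_zero (fun k hk => by simp [hrest k hk]), add_zero]

end NumberField.RingOfIntegers

open NumberField.RingOfIntegers in
theorem stmt_12_general (K : Type*) [Field K]
    (n : ℕ) (α : Fin n → 𝓞 K)
    (hα : ∀ i, ∀ φ : K →+* ℝ, 0 < φ (α i : K))
    (β : 𝓞 K)
    (hβpos : ∀ φ : K →+* ℝ, 0 < φ (β : K))
    (hβind : ¬ ∃ x y : 𝓞 K, (∀ φ : K →+* ℝ, 0 < φ (x : K)) ∧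
      (∀ φ : K →+* ℝ, 0 < φ (y : K)) ∧ β = x + y) :
    (∃ v : Fin n → 𝓞 K, β = ∑ i, α i * v i ^ 2) ↔
      ∃ i, ∃ γ : 𝓞 K, β = α i * γ ^ 2 := by
  constructor
  · rintro ⟨v, hv⟩
    obtain ⟨i, hi⟩ := IsIndecomposable.exists_eq_mul_sq_of_eq_sum ⟨hβpos, hβind⟩ hα hv
    exact ⟨i, v i, hi⟩
  · rintro ⟨i, γ, rfl⟩
    refine ⟨Pi.single i γ, ?_⟩
    rw [Finset.sum_eq_single i (fun j _ hji => by simp [hji]) (by simp)]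
    simp

theorem stmt_12 (K : Type*) [Field K] [NumberField K]
    (htr : ∀ φ : K →+* ℂ, ∀ x : K, (φ x).im = 0)
    (n : ℕ) (α : Fin n → 𝓞 K)
    (hα : ∀ i, ∀ φ : K →+* ℝ, 0 < φ (α i : K))
    (β : 𝓞 K)
    (hβpos : ∀ φ : K →+* ℝ, 0 < φ (β : K))
    (hβind : ¬ ∃ x y : 𝓞 K, (∀ φ : K →+* ℝ, 0 < φ (x : K)) ∧
      (∀ φ : K →+* ℝ, 0 < φ (y : K)) ∧ β = x + y) :
    (∃ v : Fin n → 𝓞 K, β = ∑ i, α i * v i ^ 2) ↔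
      ∃ i, ∃ γ : 𝓞 K, β = α i * γ ^ 2 :=
  stmt_12_general K n α hα β hβpos hβind
end
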